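/- Let G and H be short dicotic games. If G ≻ 0 (mod D⁻), then it is not the case that G + H + (−H) ≺ 0 (mod D⁻). -/

import Mathlib

universe u

namespace SetTheory

/-- Re-creation of Mathlib's (Dec 2024) `SetTheory.PGame`, removed from Mathlib since. -/
inductive PGame : Type (u + 1)
  | mk : ∀ α β : Type u, (α → PGame) → (β → PGame) → PGame

namespace PGame

def LeftMoves : PGame → Type u
  | mk l _ _ _ => l

def RightMoves : PGame → Type u
  | mk _ r _ _ => r

def moveLeft : ∀ g : PGame, LeftMoves g → PGame
  | mk _l _ L _ => L

def moveRight : ∀ g : PGame, RightMoves g → PGame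
  | mk _ _r _ R => R

inductive IsOption : PGame → PGame → Prop
  | moveLeft {x : PGame} (i : x.LeftMoves) : IsOption (x.moveLeft i) x
  | moveRight {x : PGame} (i : x.RightMoves) : IsOption (x.moveRight i) x

instance : Zero PGame := ⟨⟨PEmpty, PEmpty, PEmpty.elim, PEmpty.elim⟩⟩

def star : PGame.{u} := ⟨PUnit, PUnit, fun _ => 0, fun _ => 0⟩

def neg : PGame → PGame
  | ⟨l, r, L, R⟩ => ⟨r, l, fun i => neg (R i), fun i => neg (L i)⟩

instance : Neg PGame := ⟨neg⟩

noncomputable instance : Add PGame.{u} :=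
  ⟨fun x y => by
    induction x generalizing y with | mk xl xr _ _ IHxl IHxr => _
    induction y with | mk yl yr yL yR IHyl IHyr => _
    have y := mk yl yr yL yR
    refine ⟨xl ⊕ yl, xr ⊕ yr, Sum.rec ?_ ?_, Sum.rec ?_ ?_⟩
    · exact fun i => IHxl i y
    · exact IHyl
    · exact fun i => IHxr i y
    · exact IHyr⟩

def Identical : PGame.{u} → PGame.{u} → Prop
  | mk _ _ xL xR, mk _ _ yL yR =>
    Relator.BiTotal (fun i j ↦ Identical (xL i) (yL j)) ∧
      Relator.BiTotal (fun i j ↦ Identical (xR i) (yR j))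

noncomputable def birthday : PGame.{u} → Ordinal.{u}
  | ⟨_, _, xL, xR⟩ =>
    max (Ordinal.lsub.{u, u} fun i => birthday (xL i)) (Ordinal.lsub.{u, u} fun i => birthday (xR i))

theorem birthday_moveLeft_lt {x : PGame} (i : x.LeftMoves) :
    (x.moveLeft i).birthday < x.birthday := by
  cases x; rw [birthday]; exact lt_max_of_lt_left (Ordinal.lt_lsub _ i)

theorem birthday_moveRight_lt {x : PGame} (i : x.RightMoves) :
    (x.moveRight i).birthday < x.birthday := by
  cases x; rw [birthday]; exact lt_max_of_lt_right (Ordinal.lt_lsub _ i)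

end PGame

end SetTheory

open SetTheory PGame

namespace MisereDicot

def Follower (G' G : PGame) : Prop := Relation.ReflTransGen PGame.IsOption G' G

def IsShort (G : PGame) : Prop :=
  ∀ G', Follower G' G → Finite G'.LeftMoves ∧ Finite G'.RightMoves

def Dicot (G : PGame) : Prop :=
  ∀ G', Follower G' G → (IsEmpty G'.LeftMoves ↔ IsEmpty G'.RightMoves)

mutual
def LeftWinsFirst (G : PGame) : Prop :=
  IsEmpty G.LeftMoves ∨ ∃ i, ¬ RightWinsFirst (G.moveLeft i)
termination_by G.birthday
decreasing_by exact PGame.birthday_moveLeft_lt i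

def RightWinsFirst (G : PGame) : Prop :=
  IsEmpty G.RightMoves ∨ ∃ j, ¬ LeftWinsFirst (G.moveRight j)
termination_by G.birthday
decreasing_by exact PGame.birthday_moveRight_lt j
end

inductive MOutcome : Type
  | L | N | P | R
deriving DecidableEq

instance : LE MOutcome := ⟨fun a b => a = b ∨ a = .R ∨ b = .L⟩

noncomputable def outcome (G : PGame) : MOutcome := by
  classical
  exact if LeftWinsFirst G then (if RightWinsFirst G then .N else .L)
        else (if RightWinsFirst G then .R else .P)

def Dge (G H : PGame) : Prop :=
  ∀ X : PGame, IsShort X → Dicot X → outcome (H + X) ≤ outcome (G + X)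

def Deq (G H : PGame) : Prop :=
  ∀ X : PGame, IsShort X → Dicot X → outcome (G + X) = outcome (H + X)

def Dgt (G H : PGame) : Prop := Dge G H ∧ ¬ Deq G H

def DInvertible (G : PGame) : Prop :=
  ∃ H : PGame, IsShort H ∧ Dicot H ∧ Deq (G + H) 0

/-- The left option `G^L_i` is reversible through its right option `(G^L_i)^R_j ≼ G`. -/
def LeftReversibleAt (G : PGame) (i : G.LeftMoves) (j : (G.moveLeft i).RightMoves) : Prop :=
  Dge G ((G.moveLeft i).moveRight j)

def RightReversibleAt (G : PGame) (j : G.RightMoves) (i : (G.moveRight j).LeftMoves) : Prop :=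
  Dge ((G.moveRight j).moveLeft i) G

/-- `G` has a dominated left option (removable by the Domination theorem). -/
def LeftDominated (G : PGame) : Prop :=
  ∃ i i' : G.LeftMoves, ¬ (G.moveLeft i).Identical (G.moveLeft i') ∧
    Dge (G.moveLeft i') (G.moveLeft i)

def RightDominated (G : PGame) : Prop :=
  ∃ j j' : G.RightMoves, ¬ (G.moveRight j).Identical (G.moveRight j') ∧
    Dge (G.moveRight j) (G.moveRight j')

/-- `G` has a non-atomic reversible left option (bypassable). -/
def LeftNonAtomicReversible (G : PGame) : Prop :=
  ∃ i j, LeftReversibleAt G i j ∧ Nonempty ((G.moveLeft i).moveRight j).LeftMoves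

def RightNonAtomicReversible (G : PGame) : Prop :=
  ∃ j i, RightReversibleAt G j i ∧ Nonempty ((G.moveRight j).moveLeft i).RightMoves

/-- `G` has an atomic-reversible left option to which the atomic-reversibility
replacement applies nontrivially (i.e. changing the set of options): either some
other left option is a winning first move for Left (so the option is removable),
or the option is not already `*`. -/
def LeftAtomicReducible (G : PGame) : Prop :=
  ∃ i j, LeftReversibleAt G i j ∧ IsEmpty ((G.moveLeft i).moveRight j).LeftMoves ∧
    ((∃ i', ¬ (G.moveLeft i').Identical (G.moveLeft i) ∧ ¬ RightWinsFirst (G.moveLeft i')) ∨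
      ¬ (G.moveLeft i).Identical star)

def RightAtomicReducible (G : PGame) : Prop :=
  ∃ j i, RightReversibleAt G j i ∧ IsEmpty ((G.moveRight j).moveLeft i).RightMoves ∧
    ((∃ j', ¬ (G.moveRight j').Identical (G.moveRight j) ∧ ¬ LeftWinsFirst (G.moveRight j')) ∨
      ¬ (G.moveRight j).Identical star)

/-- The Substitution theorem applies to `G`: `G = {A | C}` with `A` an
atomic-reversible left option and `C` an atomic-reversible right option. -/
def SubstitutionReducible (G : PGame) : Prop :=
  (∀ i i' : G.LeftMoves, (G.moveLeft i).Identical (G.moveLeft i')) ∧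
  (∀ j j' : G.RightMoves, (G.moveRight j).Identical (G.moveRight j')) ∧
  (∃ i j, LeftReversibleAt G i j ∧ IsEmpty ((G.moveLeft i).moveRight j).LeftMoves) ∧
  (∃ j i, RightReversibleAt G j i ∧ IsEmpty ((G.moveRight j).moveLeft i).RightMoves)

/-- `G` is in canonical form: no follower admits any of the misère-dicot
simplifications (domination, non-atomic reversibility, atomic reversibility,
substitution) producing an equivalent game with a different set of options. -/
def CanonicalForm (G : PGame) : Prop :=
  ∀ G', Follower G' G →
    ¬ (LeftDominated G' ∨ RightDominated G' ∨
       LeftNonAtomicReversible G' ∨ RightNonAtomicReversible G' ∨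
       LeftAtomicReducible G' ∨ RightAtomicReducible G' ∨
       SubstitutionReducible G')

/-- The game `*2 = {0, * | 0, *}`. -/
def star2 : PGame :=
  PGame.mk Bool Bool (fun b => cond b star 0) (fun b => cond b star 0)

open Classical in
/-- The adjoint `G°` of `G`. -/
noncomputable def adjoint : PGame → PGame
  | PGame.mk l r L R =>
    if IsEmpty l ∧ IsEmpty r then star
    else if IsEmpty l then PGame.mk r PUnit (fun j => adjoint (R j)) (fun _ => 0)
    else if IsEmpty r then PGame.mk PUnit l (fun _ => 0) (fun i => adjoint (L i))
    else PGame.mk r l (fun j => adjoint (R j)) (fun i => adjoint (L i))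

/-- A universe of short games: a class closed under taking options, disjunctive
sums and conjugates. -/
structure GameUniverse where
  mem : PGame → Prop
  short_mem : ∀ G, mem G → IsShort G
  isOption_mem : ∀ G G', mem G → PGame.IsOption G' G → mem G'
  add_mem : ∀ G H, mem G → mem H → mem (G + H)
  neg_mem : ∀ G, mem G → mem (-G)

/-- `G ≽ H` modulo the universe `U`. -/
def UGe (U : GameUniverse) (G H : PGame) : Prop :=
  ∀ X : PGame, U.mem X → outcome (H + X) ≤ outcome (G + X)

/-- `G = H` modulo the universe `U`. -/
def UEq (U : GameUniverse) (G H : PGame) : Prop :=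
  ∀ X : PGame, U.mem X → outcome (G + X) = outcome (H + X)

/-- `G ≻ H` modulo the universe `U`. -/
def UGt (U : GameUniverse) (G H : PGame) : Prop := UGe U G H ∧ ¬ UEq U G H

/-- `J` is invertible in the universe `U`. -/
def UInvertible (U : GameUniverse) (J : PGame) : Prop :=
  ∃ J' : PGame, U.mem J' ∧ UEq U (J + J') 0

end MisereDicot

/-!
If `G + H + (-H) ≼ 0` then, since `G ≽ 0`, also `H + (-H) ≼ 0`. The game `H + (-H)` is
its own conjugate up to relabelling and conjugation reverses `≽`, so `H + (-H) ≽ 0` as well.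
Then `0 ≽ G + H + (-H) ≽ H + (-H) ≽ 0`, i.e. `G + H + (-H) = 0`, so it is not strictly below `0`.
-/

namespace SetTheory
namespace PGame

theorem neg_neg : ∀ x : PGame, -(-x) = x
  | mk l r L R => by
    show mk l r (fun i => -(-(L i))) (fun j => -(-(R j))) = mk l r L R
    simp only [neg_neg]

theorem neg_zero : -(0 : PGame) = 0 := by
  show mk _ _ _ _ = mk _ _ _ _
  congr <;> funext i <;> exact i.elim

theorem leftMoves_neg : ∀ x : PGame, (-x).LeftMoves = x.RightMoves
  | ⟨_, _, _, _⟩ => rfl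

theorem rightMoves_neg : ∀ x : PGame, (-x).RightMoves = x.LeftMoves
  | ⟨_, _, _, _⟩ => rfl

theorem leftMoves_add : ∀ x y : PGame.{u}, (x + y).LeftMoves = (x.LeftMoves ⊕ y.LeftMoves)
  | ⟨_, _, _, _⟩, ⟨_, _, _, _⟩ => rfl

theorem rightMoves_add : ∀ x y : PGame.{u}, (x + y).RightMoves = (x.RightMoves ⊕ y.RightMoves)
  | ⟨_, _, _, _⟩, ⟨_, _, _, _⟩ => rfl

theorem exists_of_isOption_neg {x y : PGame} (h : IsOption x (-y)) :
    ∃ y', IsOption y' y ∧ x = -y' := by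
  cases y with
  | mk l r L R =>
    cases h with
    | moveLeft j => exact ⟨R j, .moveRight (x := mk l r L R) j, rfl⟩
    | moveRight i => exact ⟨L i, .moveLeft (x := mk l r L R) i, rfl⟩

theorem exists_of_isOption_add {x y z : PGame.{u}} (h : IsOption z (x + y)) :
    (∃ x', IsOption x' x ∧ z = x' + y) ∨ ∃ y', IsOption y' y ∧ z = x + y' := by
  obtain ⟨xl, xr, xL, xR⟩ := x
  obtain ⟨yl, yr, yL, yR⟩ := y
  cases h with
  | moveLeft k =>
    rcases k with i | i
    · exact .inl ⟨_, .moveLeft (x := mk xl xr xL xR) i, rfl⟩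
    · exact .inr ⟨_, .moveLeft (x := mk yl yr yL yR) i, rfl⟩
  | moveRight k =>
    rcases k with j | j
    · exact .inl ⟨_, .moveRight (x := mk xl xr xL xR) j, rfl⟩
    · exact .inr ⟨_, .moveRight (x := mk yl yr yL yR) j, rfl⟩

inductive Relabelling : PGame.{u} → PGame.{u} → Prop
  | mk : ∀ {x y : PGame} (L : x.LeftMoves ≃ y.LeftMoves) (R : x.RightMoves ≃ y.RightMoves),
      (∀ i, Relabelling (x.moveLeft i) (y.moveLeft (L i))) →
        (∀ j, Relabelling (x.moveRight j) (y.moveRight (R j))) → Relabelling x y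

infixl:50 " ≡r " => SetTheory.PGame.Relabelling

namespace Relabelling

theorem refl (x : PGame.{u}) : x ≡r x := by
  induction x with
  | mk l r L R ihL ihR => exact ⟨Equiv.refl _, Equiv.refl _, ihL, ihR⟩

theorem trans {x y z : PGame.{u}} (h₁ : x ≡r y) (h₂ : y ≡r z) : x ≡r z := by
  induction h₁ generalizing z with
  | mk L₁ R₁ _ _ ihL ihR =>
    obtain ⟨L₂, R₂, hL₂, hR₂⟩ := h₂
    exact ⟨L₁.trans L₂, R₁.trans R₂, fun i => ihL i (hL₂ _), fun j => ihR j (hR₂ _)⟩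

theorem add_congr {w x y z : PGame.{u}} (h₁ : w ≡r x) (h₂ : y ≡r z) : w + y ≡r x + z := by
  induction h₁ generalizing y z with
  | @mk w x L₁ R₁ _ _ ih₁L ih₁R =>
    induction h₂ with
    | @mk y z L₂ R₂ hL₂ hR₂ ih₂L ih₂R =>
      have hyz : y ≡r z := ⟨L₂, R₂, hL₂, hR₂⟩
      cases w; cases x; cases y; cases z
      refine ⟨Equiv.sumCongr L₁ L₂, Equiv.sumCongr R₁ R₂, ?_, ?_⟩
      · rintro (i | i)
        exacts [ih₁L i hyz, ih₂L i]
      · rintro (j | j)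
        exacts [ih₁R j hyz, ih₂R j]

end Relabelling

theorem zero_add_relabelling (x : PGame.{u}) : 0 + x ≡r x := by
  induction x with
  | mk xl xr xL xR ihL ihR =>
    refine ⟨Equiv.emptySum PEmpty xl, Equiv.emptySum PEmpty xr, ?_, ?_⟩
    · rintro (i | i)
      exacts [i.elim, ihL i]
    · rintro (j | j)
      exacts [j.elim, ihR j]

theorem add_comm_relabelling (x y : PGame.{u}) : x + y ≡r y + x := by
  induction x generalizing y with
  | mk xl xr xL xR ihxL ihxR =>
    induction y with
    | mk yl yr yL yR ihyL ihyR =>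
      refine ⟨Equiv.sumComm _ _, Equiv.sumComm _ _, ?_, ?_⟩
      · rintro (i | i)
        exacts [ihxL i _, ihyL i]
      · rintro (j | j)
        exacts [ihxR j _, ihyR j]

theorem add_assoc_relabelling (x y z : PGame.{u}) : x + y + z ≡r x + (y + z) := by
  induction x generalizing y z with
  | mk xl xr xL xR ihxL ihxR =>
    induction y generalizing z with
    | mk yl yr yL yR ihyL ihyR =>
      induction z with
      | mk zl zr zL zR ihzL ihzR =>
        refine ⟨Equiv.sumAssoc _ _ _, Equiv.sumAssoc _ _ _, ?_, ?_⟩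
        · rintro ((i | i) | i)
          exacts [ihxL i _ _, ihyL i _, ihzL i]
        · rintro ((j | j) | j)
          exacts [ihxR j _ _, ihyR j _, ihzR j]

theorem neg_add_relabelling (x y : PGame.{u}) : -(x + y) ≡r -x + -y := by
  induction x generalizing y with
  | mk xl xr xL xR ihxL ihxR =>
    induction y with
    | mk yl yr yL yR ihyL ihyR =>
      refine ⟨Equiv.refl _, Equiv.refl _, ?_, ?_⟩
      · rintro (j | j)
        exacts [ihxR j _, ihyR j]
      · rintro (i | i)
        exacts [ihxL i _, ihyL i]

theorem neg_add_self_relabelling (x : PGame.{u}) : -(x + -x) ≡r x + -x := by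
  have h := neg_add_relabelling x (-x)
  rw [neg_neg] at h
  exact h.trans (add_comm_relabelling (-x) x)

end PGame
end SetTheory

namespace MisereDicot

theorem Follower.exists_neg {G' Y : PGame} (h : Follower G' (-Y)) :
    ∃ Y', Follower Y' Y ∧ G' = -Y' := by
  induction h using Relation.ReflTransGen.head_induction_on with
  | refl => exact ⟨Y, .refl, rfl⟩
  | head hstep _ ih =>
    obtain ⟨Y', hY', rfl⟩ := ih
    obtain ⟨Y'', hopt, rfl⟩ := PGame.exists_of_isOption_neg hstep
    exact ⟨Y'', .head hopt hY', rfl⟩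

theorem Follower.exists_add {G' A B : PGame} (h : Follower G' (A + B)) :
    ∃ A' B', Follower A' A ∧ Follower B' B ∧ G' = A' + B' := by
  induction h using Relation.ReflTransGen.head_induction_on with
  | refl => exact ⟨A, B, .refl, .refl, rfl⟩
  | head hstep _ ih =>
    obtain ⟨A', B', hA', hB', rfl⟩ := ih
    rcases PGame.exists_of_isOption_add hstep with ⟨A'', hA'', rfl⟩ | ⟨B'', hB'', rfl⟩
    exacts [⟨A'', B', .head hA'' hA', hB', rfl⟩, ⟨A', B'', hA', .head hB'' hB', rfl⟩]

theorem IsShort.neg {Y : PGame} (h : IsShort Y) : IsShort (-Y) := by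
  intro G' hf
  obtain ⟨Y', hY', rfl⟩ := hf.exists_neg
  rw [PGame.leftMoves_neg, PGame.rightMoves_neg]
  exact (h Y' hY').symm

theorem Dicot.neg {Y : PGame} (h : Dicot Y) : Dicot (-Y) := by
  intro G' hf
  obtain ⟨Y', hY', rfl⟩ := hf.exists_neg
  rw [PGame.leftMoves_neg, PGame.rightMoves_neg]
  exact (h Y' hY').symm

theorem IsShort.add {A B : PGame} (hA : IsShort A) (hB : IsShort B) : IsShort (A + B) := by
  intro G' hf
  obtain ⟨A', B', hA', hB', rfl⟩ := hf.exists_add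
  obtain ⟨_, _⟩ := hA A' hA'
  obtain ⟨_, _⟩ := hB B' hB'
  rw [PGame.leftMoves_add, PGame.rightMoves_add]
  exact ⟨inferInstance, inferInstance⟩

theorem Dicot.add {A B : PGame} (hA : Dicot A) (hB : Dicot B) : Dicot (A + B) := by
  intro G' hf
  obtain ⟨A', B', hA', hB', rfl⟩ := hf.exists_add
  rw [PGame.leftMoves_add, PGame.rightMoves_add, isEmpty_sum, isEmpty_sum,
    hA A' hA', hB B' hB']

theorem leftWinsFirst_iff (G : PGame) :
    LeftWinsFirst G ↔ IsEmpty G.LeftMoves ∨ ∃ i, ¬ RightWinsFirst (G.moveLeft i) := by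
  rw [LeftWinsFirst]

theorem rightWinsFirst_iff (G : PGame) :
    RightWinsFirst G ↔ IsEmpty G.RightMoves ∨ ∃ j, ¬ LeftWinsFirst (G.moveRight j) := by
  rw [RightWinsFirst]

theorem winsFirst_neg (G : PGame) :
    (LeftWinsFirst (-G) ↔ RightWinsFirst G) ∧ (RightWinsFirst (-G) ↔ LeftWinsFirst G) := by
  induction G with
  | mk l r L R ihL ihR =>
    constructor
    · rw [leftWinsFirst_iff, rightWinsFirst_iff]
      exact or_congr Iff.rfl (exists_congr fun j => not_congr (ihR j).2)
    · rw [rightWinsFirst_iff, leftWinsFirst_iff]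
      exact or_congr Iff.rfl (exists_congr fun i => not_congr (ihL i).1)

theorem winsFirst_congr {G H : PGame} (h : G ≡r H) :
    (LeftWinsFirst G ↔ LeftWinsFirst H) ∧ (RightWinsFirst G ↔ RightWinsFirst H) := by
  induction h with
  | mk L R _ _ ihL ihR =>
    constructor
    · rw [leftWinsFirst_iff, leftWinsFirst_iff]
      exact or_congr L.isEmpty_congr (L.exists_congr fun i => not_congr (ihL i).2)
    · rw [rightWinsFirst_iff, rightWinsFirst_iff]
      exact or_congr R.isEmpty_congr (R.exists_congr fun j => not_congr (ihR j).1)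

namespace MOutcome

theorem le_def (a b : MOutcome) : a ≤ b ↔ a = b ∨ a = .R ∨ b = .L := Iff.rfl

instance : PartialOrder MOutcome where
  le_refl a := .inl rfl
  le_trans a b c := by cases a <;> cases b <;> cases c <;> simp [le_def]
  le_antisymm a b := by cases a <;> cases b <;> simp [le_def]

end MOutcome

theorem outcome_le_outcome_iff (A B : PGame) : outcome A ≤ outcome B ↔
    (LeftWinsFirst A → LeftWinsFirst B) ∧ (RightWinsFirst B → RightWinsFirst A) := by
  unfold outcome
  by_cases h1 : LeftWinsFirst A <;> by_cases h2 : RightWinsFirst A <;>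
    by_cases h3 : LeftWinsFirst B <;> by_cases h4 : RightWinsFirst B <;>
    simp [h1, h2, h3, h4, MOutcome.le_def]

theorem outcome_congr {G H : PGame} (h : G ≡r H) : outcome G = outcome H := by
  obtain ⟨hL, hR⟩ := winsFirst_congr h
  exact le_antisymm ((outcome_le_outcome_iff G H).2 ⟨hL.1, hR.2⟩)
    ((outcome_le_outcome_iff H G).2 ⟨hL.2, hR.1⟩)

theorem outcome_neg_le_outcome_neg_iff (A B : PGame) :
    outcome (-A) ≤ outcome (-B) ↔ outcome B ≤ outcome A := by
  rw [outcome_le_outcome_iff, outcome_le_outcome_iff, (winsFirst_neg A).1, (winsFirst_neg A).2,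
    (winsFirst_neg B).1, (winsFirst_neg B).2, and_comm]

theorem Dge.trans {G H K : PGame} (h₁ : Dge G H) (h₂ : Dge H K) : Dge G K :=
  fun X hs hd => (h₂ X hs hd).trans (h₁ X hs hd)

theorem Deq.dge {G H : PGame} (h : Deq G H) : Dge G H :=
  fun X hs hd => (h X hs hd).ge

theorem Deq.symm {G H : PGame} (h : Deq G H) : Deq H G :=
  fun X hs hd => (h X hs hd).symm

theorem Deq.of_dge_of_dge {G H : PGame} (h₁ : Dge G H) (h₂ : Dge H G) : Deq G H :=
  fun X hs hd => le_antisymm (h₂ X hs hd) (h₁ X hs hd)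

theorem Deq.of_relabelling {G H : PGame} (h : G ≡r H) : Deq G H :=
  fun X _ _ => outcome_congr (h.add_congr (.refl X))

theorem Dge.add_right {G H : PGame} (h : Dge G H) {K : PGame} (hKs : IsShort K)
    (hKd : Dicot K) : Dge (G + K) (H + K) := fun X hs hd => by
  rw [outcome_congr (PGame.add_assoc_relabelling H K X),
    outcome_congr (PGame.add_assoc_relabelling G K X)]
  exact h _ (hKs.add hs) (hKd.add hd)

theorem Dge.neg {G H : PGame} (h : Dge G H) : Dge (-H) (-G) := fun X hs hd => by
  have hrel (A : PGame) : -(A + -X) ≡r -A + X := by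
    simpa only [PGame.neg_neg] using PGame.neg_add_relabelling A (-X)
  rw [← outcome_congr (hrel G), ← outcome_congr (hrel H), outcome_neg_le_outcome_neg_iff]
  exact h _ hs.neg hd.neg

/-- Let `G` and `H` be short dicotic games. If `G ≻ 0` (mod `D⁻`),
then it is not the case that `G + H + (−H) ≺ 0` (mod `D⁻`). -/
theorem stmt0 (G H : PGame) (hGs : IsShort G) (hGd : Dicot G)
    (hHs : IsShort H) (hHd : Dicot H) (hG : Dgt G 0) :
    ¬ Dgt 0 (G + H + (-H)) := by
  rintro ⟨hle, hne⟩
  set K := H + -H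
  have hKs : IsShort K := hHs.add hHs.neg
  have hKd : Dicot K := hHd.add hHd.neg
  have hassoc : Deq (G + H + -H) (G + K) := .of_relabelling (PGame.add_assoc_relabelling G H (-H))
  have hGK : Dge (G + K) K :=
    (hG.1.add_right hKs hKd).trans (Deq.of_relabelling (PGame.zero_add_relabelling K)).dge
  have hK_le : Dge 0 K := hle.trans (hassoc.dge.trans hGK)
  have hK_ge : Dge K 0 := by
    have := (Deq.of_relabelling (PGame.neg_add_self_relabelling H)).symm.dge.trans hK_le.neg
    rwa [PGame.neg_zero] at this
  exact hne (.of_dge_of_dge hle (hassoc.dge.trans (hGK.trans hK_ge)))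

end MisereDicot
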